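/- arXiv:1104.1377 — 6 statements merged into one kernel-verified Lean document; each statement's English description precedes it below -/
import Mathlib

section
/- Let A_1, A_2, ..., A_N be events in a probability space such that the probability of each event is at most p. Suppose that for each index i there is a set Γ_i of at most d indices with i ∉ Γ_i such that for every set J of indices disjoint from Γ_i ∪ {i}, P(A_i ∩ ⋂_{j∈J} A_j^c) = P(A_i) · P(⋂_{j∈J} A_j^c) (i.e., A_i is mutually independent of all events A_j with j ∉ Γ_i ∪ {i}). If e·p·(d+1) ≤ 1 (where e is Euler's number), then P(⋂_{i=1}^N A_i^c) > 0. -/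
open MeasureTheory
open scoped ENNReal

/-! Write `B S = ⋂ j ∈ S, (A j)ᶜ` and `x = 1 / (d + 2)`. By strong induction on `S` one shows
`μ (A i ∩ B S) ≤ x * μ (B S)` for `i ∉ S`: split `S` into the neighbours `S ∩ Γ i` of `i` and the
rest `S \ Γ i`. Independence gives `μ (A i ∩ B (S \ Γ i)) = μ (A i) * μ (B (S \ Γ i))`, while the
induction hypothesis, used for the at most `d` neighbours one at a time, gives
`(1 - x) ^ d * μ (B (S \ Γ i)) ≤ μ (B S)`. Chaining the same bound over all indices yields
`(1 - x) ^ N ≤ μ (⋂ i, (A i)ᶜ)`. The choice of `x` works because `(1 + 1 / (d + 1)) ^ (d + 1) ≤ e`;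
the textbook choice `1 / (d + 1)` would violate `x < 1` when `d = 0`. -/

namespace LovaszLocalLemma

open Finset

variable {Ω ι : Type*} [MeasurableSpace Ω] {μ : Measure Ω} [IsFiniteMeasure μ]
  {A : ι → Set Ω} {x : ℝ≥0∞}

theorem one_sub_mul_measure_le_measure_biInter_compl_insert [DecidableEq ι] {S : Finset ι}
    {j : ι} (h : μ (A j ∩ ⋂ k ∈ S, (A k)ᶜ) ≤ x * μ (⋂ k ∈ S, (A k)ᶜ)) :
    (1 - x) * μ (⋂ k ∈ S, (A k)ᶜ) ≤ μ (⋂ k ∈ insert j S, (A k)ᶜ) := by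
  set B := ⋂ k ∈ S, (A k)ᶜ
  have hB : ⋂ k ∈ insert j S, (A k)ᶜ = B \ (A j ∩ B) := by
    rw [set_biInter_insert, Set.sdiff_inter_self_eq_sdiff, Set.sdiff_eq, Set.inter_comm]
  calc (1 - x) * μ B = μ B - x * μ B := by
        rw [ENNReal.sub_mul fun _ _ ↦ measure_ne_top μ B, one_mul]
    _ ≤ μ B - μ (A j ∩ B) := tsub_le_tsub_left h _
    _ ≤ μ (⋂ k ∈ insert j S, (A k)ᶜ) := hB ▸ le_measure_sdiff

theorem one_sub_pow_mul_measure_le_measure_biInter_compl_union [DecidableEq ι]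
    {R T : Finset ι} (hRT : Disjoint R T)
    (hbound : ∀ U ⊆ R ∪ T, ∀ j ∈ T, j ∉ U →
      μ (A j ∩ ⋂ k ∈ U, (A k)ᶜ) ≤ x * μ (⋂ k ∈ U, (A k)ᶜ)) :
    (1 - x) ^ #T * μ (⋂ k ∈ R, (A k)ᶜ) ≤ μ (⋂ k ∈ R ∪ T, (A k)ᶜ) := by
  induction T using Finset.induction_on with
  | empty => simp
  | @insert j T hjT ih =>
    have hjR : j ∉ R := disjoint_right.mp hRT (mem_insert_self j T)
    have hT : (1 - x) ^ #T * μ (⋂ k ∈ R, (A k)ᶜ) ≤ μ (⋂ k ∈ R ∪ T, (A k)ᶜ) :=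
      ih (disjoint_insert_right.mp hRT).2 fun U hU k hk ↦
        hbound U (hU.trans (union_subset_union_right (subset_insert j T))) k (mem_insert_of_mem hk)
    have hstep := one_sub_mul_measure_le_measure_biInter_compl_insert (μ := μ) (j := j)
      (hbound (R ∪ T) (union_subset_union_right (subset_insert j T)) j (mem_insert_self j T)
        (by simp [hjR, hjT]))
    calc (1 - x) ^ #(insert j T) * μ (⋂ k ∈ R, (A k)ᶜ)
        = (1 - x) * ((1 - x) ^ #T * μ (⋂ k ∈ R, (A k)ᶜ)) := by
          rw [card_insert_of_notMem hjT, pow_succ', mul_assoc]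
      _ ≤ (1 - x) * μ (⋂ k ∈ R ∪ T, (A k)ᶜ) := mul_le_mul_right hT _
      _ ≤ μ (⋂ k ∈ R ∪ insert j T, (A k)ᶜ) := union_insert j R T ▸ hstep

theorem measure_inter_biInter_compl_le [DecidableEq ι] {d : ℕ} (Γ : ι → Finset ι)
    (hA : ∀ i, μ (A i) ≤ x * (1 - x) ^ d) (hΓ : ∀ i, #(Γ i) ≤ d)
    (hInd : ∀ i J, Disjoint J (insert i (Γ i)) →
      μ (A i ∩ ⋂ j ∈ J, (A j)ᶜ) = μ (A i) * μ (⋂ j ∈ J, (A j)ᶜ))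
    (S : Finset ι) {i : ι} (hi : i ∉ S) :
    μ (A i ∩ ⋂ j ∈ S, (A j)ᶜ) ≤ x * μ (⋂ j ∈ S, (A j)ᶜ) := by
  induction S using Finset.strongInduction generalizing i with
  | H S ih =>
  have hS : S \ Γ i ∪ S ∩ Γ i = S := sdiff_union_inter S (Γ i)
  have hfar : Disjoint (S \ Γ i) (insert i (Γ i)) :=
    disjoint_insert_right.mpr ⟨fun h ↦ hi (mem_sdiff.mp h).1, sdiff_disjoint⟩
  have hnear : (1 - x) ^ #(S ∩ Γ i) * μ (⋂ j ∈ S \ Γ i, (A j)ᶜ) ≤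
      μ (⋂ j ∈ S \ Γ i ∪ S ∩ Γ i, (A j)ᶜ) :=
    one_sub_pow_mul_measure_le_measure_biInter_compl_union (disjoint_sdiff_inter S (Γ i))
      fun U hU j hj hjU ↦
        ih U ((ssubset_iff_of_subset (hS ▸ hU)).mpr ⟨j, (mem_inter.mp hj).1, hjU⟩) hjU
  rw [hS] at hnear
  calc μ (A i ∩ ⋂ j ∈ S, (A j)ᶜ) ≤ μ (A i ∩ ⋂ j ∈ S \ Γ i, (A j)ᶜ) :=
        measure_mono (Set.inter_subset_inter_right _ (Set.biInter_subset_biInter_left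
          (Set.subset_def.mpr fun _ h ↦ mem_sdiff.mp h |>.1)))
    _ = μ (A i) * μ (⋂ j ∈ S \ Γ i, (A j)ᶜ) := hInd i _ hfar
    _ ≤ x * (1 - x) ^ #(S ∩ Γ i) * μ (⋂ j ∈ S \ Γ i, (A j)ᶜ) := by
        gcongr
        exact (hA i).trans (mul_le_mul_right (pow_le_pow_of_le_one zero_le tsub_le_self
          ((card_le_card inter_subset_right).trans (hΓ i))) x)
    _ ≤ x * μ (⋂ j ∈ S, (A j)ᶜ) := by
        rw [mul_assoc]
        gcongr

theorem measure_iInter_compl_pos_of_le_mul_one_sub_pow [Fintype ι] [DecidableEq ι] [NeZero μ]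
    {d : ℕ} (Γ : ι → Finset ι) (hx : x < 1)
    (hA : ∀ i, μ (A i) ≤ x * (1 - x) ^ d) (hΓ : ∀ i, #(Γ i) ≤ d)
    (hInd : ∀ i J, Disjoint J (insert i (Γ i)) →
      μ (A i ∩ ⋂ j ∈ J, (A j)ᶜ) = μ (A i) * μ (⋂ j ∈ J, (A j)ᶜ)) :
    0 < μ (⋂ i, (A i)ᶜ) := by
  have h := one_sub_pow_mul_measure_le_measure_biInter_compl_union (μ := μ) (x := x)
    (disjoint_empty_left (univ : Finset ι))
    fun U _ j _ hj ↦ measure_inter_biInter_compl_le Γ hA hΓ hInd U hj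
  simp only [empty_union, mem_univ, Set.iInter_true, notMem_empty, Set.iInter_of_empty,
    Set.iInter_univ, card_univ] at h
  exact lt_of_lt_of_le
    (ENNReal.mul_pos (ENNReal.pow_pos (tsub_pos_of_lt hx) _).ne' (NeZero.ne (μ Set.univ))) h

end LovaszLocalLemma

theorem Real.inv_exp_mul_le_inv_mul_one_sub_inv_pow (d : ℕ) :
    (exp 1 * (d + 1))⁻¹ ≤ ((d : ℝ) + 2)⁻¹ * (1 - ((d : ℝ) + 2)⁻¹) ^ d := by
  have h : (((d : ℝ) + 2) / (d + 1)) ^ (d + 1) ≤ exp 1 := by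
    convert one_add_inv_pow_le_exp (n := d + 1) using 2
    push_cast
    field_simp
    ring
  have hrhs : ((d : ℝ) + 2)⁻¹ * (1 - ((d : ℝ) + 2)⁻¹) ^ d
      = ((((d : ℝ) + 2) / (d + 1)) ^ (d + 1) * (d + 1))⁻¹ := by
    rw [show 1 - ((d : ℝ) + 2)⁻¹ = (d + 1) / (d + 2) by field_simp; ring, div_pow, div_pow,
      pow_succ, pow_succ]
    field_simp
  rw [hrhs]
  gcongr

theorem ENNReal.inv_ofReal_exp_mul_le_inv_mul_one_sub_inv_pow (d : ℕ) :
    (ENNReal.ofReal (Real.exp 1) * (d + 1))⁻¹ ≤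
      (d + 2 : ℝ≥0∞)⁻¹ * (1 - (d + 2 : ℝ≥0∞)⁻¹) ^ d := by
  have key := ENNReal.ofReal_le_ofReal (Real.inv_exp_mul_le_inv_mul_one_sub_inv_pow d)
  have hx : 0 ≤ 1 - ((d : ℝ) + 2)⁻¹ :=
    sub_nonneg.mpr (inv_le_one_of_one_le₀ (by linarith [d.cast_nonneg (α := ℝ)]))
  rw [ENNReal.ofReal_inv_of_pos (by positivity), ENNReal.ofReal_mul (by positivity),
    ENNReal.ofReal_mul (by positivity), ENNReal.ofReal_pow hx, ENNReal.ofReal_sub _ (by positivity),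
    ENNReal.ofReal_inv_of_pos (by positivity)] at key
  simpa [ENNReal.ofReal_add] using key

theorem lovasz_local_lemma_symmetric_general
    {Ω : Type*} [MeasurableSpace Ω] (μ : Measure Ω) [IsProbabilityMeasure μ]
    (N : ℕ) (A : Fin N → Set Ω)
    (p : ℝ≥0∞) (hp : ∀ i, μ (A i) ≤ p)
    (d : ℕ) (Γ : Fin N → Finset (Fin N))
    (hΓcard : ∀ i, (Γ i).card ≤ d)
    (hInd : ∀ i : Fin N, ∀ J : Finset (Fin N),
      Disjoint J (insert i (Γ i)) →
      μ (A i ∩ ⋂ j ∈ J, (A j)ᶜ) = μ (A i) * μ (⋂ j ∈ J, (A j)ᶜ))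
    (hLLL : ENNReal.ofReal (Real.exp 1) * p * (d + 1) ≤ 1) :
    0 < μ (⋂ i, (A i)ᶜ) := by
  have hp' : p ≤ (ENNReal.ofReal (Real.exp 1) * (d + 1))⁻¹ :=
    ENNReal.le_inv_iff_mul_le.mpr (by rwa [mul_left_comm, ← mul_assoc])
  refine LovaszLocalLemma.measure_iInter_compl_pos_of_le_mul_one_sub_pow (x := (d + 2)⁻¹) Γ
    ?_ (fun i ↦ (hp i).trans (hp'.trans
      (ENNReal.inv_ofReal_exp_mul_le_inv_mul_one_sub_inv_pow d))) hΓcard hInd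
  rw [ENNReal.inv_lt_one]
  exact_mod_cast (by omega : 1 < d + 2)

/-- **Lovász Local Lemma (symmetric version).** If each of the events `A 1, …, A N`
has probability at most `p`, each event `A i` is mutually independent of all events
`A j` with `j` outside a set `Γ i` of at most `d` other indices, and
`e · p · (d+1) ≤ 1`, then with positive probability none of the events holds. -/
theorem lovasz_local_lemma_symmetric
    {Ω : Type*} [MeasurableSpace Ω] (μ : Measure Ω) [IsProbabilityMeasure μ]
    (N : ℕ) (A : Fin N → Set Ω) (hA : ∀ i, MeasurableSet (A i))
    (p : ℝ≥0∞) (hp : ∀ i, μ (A i) ≤ p)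
    (d : ℕ) (Γ : Fin N → Finset (Fin N))
    (hΓcard : ∀ i, (Γ i).card ≤ d)
    (hΓself : ∀ i, i ∉ Γ i)
    (hInd : ∀ i : Fin N, ∀ J : Finset (Fin N),
      Disjoint J (insert i (Γ i)) →
      μ (A i ∩ ⋂ j ∈ J, (A j)ᶜ) = μ (A i) * μ (⋂ j ∈ J, (A j)ᶜ))
    (hLLL : ENNReal.ofReal (Real.exp 1) * p * (d + 1) ≤ 1) :
    0 < μ (⋂ i, (A i)ᶜ) :=
  lovasz_local_lemma_symmetric_general μ N A p hp d Γ hΓcard hInd hLLL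
end

section
/- Let G be a simple graph on n vertices with maximum degree at most D, where D ≥ 1. Then for every integer w ≥ 1, the number of w-element vertex subsets S of G such that the subgraph of G induced on S is connected is at most n·(4D)^w. -/
/-! A connected set `S ∋ v` with at least two elements is the disjoint union of connected sets
`A` and `B` with `v ∈ B` and `A` containing a neighbour of `v`: remove `v` if that keeps `S`
connected, and otherwise split after removing a non-cut vertex `u ≠ v` and put `u` back next to
one of its neighbours. Recording `S` by the neighbour, `A` and `B`, the number `c(v, k)` of
connected `k`-sets through `v` satisfies `c(v, k + 2) ≤ D ∑_{i + j = k} c(x, i + 1) c(v, j + 1)`,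
the Catalan recursion scaled by `D`. Hence `c(v, k + 1) ≤ D ^ k Cat k ≤ (4 D) ^ k`, and summing
over `v` gives the bound. -/

open Finset

lemma catalan_le_four_pow (n : ℕ) : catalan n ≤ 4 ^ n :=
  calc catalan n ≤ (n + 1) * catalan n := Nat.le_mul_of_pos_left _ n.succ_pos
    _ = n.centralBinom := succ_mul_catalan_eq_centralBinom n
    _ ≤ 4 ^ n := Nat.centralBinom_le_four_pow n

namespace SimpleGraph

variable {V : Type*} {G : SimpleGraph V}

lemma connected_induce_of_card_eq_one {S : Finset V} (hS : #S = 1) :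
    (G.induce (S : Set V)).Connected := by
  obtain ⟨v, rfl⟩ := card_eq_one.1 hS
  rw [coe_singleton]
  simp

lemma Connected.induce_insert {s : Set V} {u w : V} (hs : (G.induce s).Connected) (hw : w ∈ s)
    (hadj : G.Adj u w) : (G.induce (insert u s)).Connected := by
  have hu : (G.induce {u}).Connected := by simp
  rw [Set.insert_eq]
  exact connected_induce_union hu.preconnected hs.preconnected rfl hw hadj

lemma exists_adj_of_connected_induce {s : Set V} (hs : (G.induce s).Connected)
    (hnt : s.Nontrivial) {u : V} (hu : u ∈ s) : ∃ w ∈ s, G.Adj u w := by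
  have := hnt.coe_sort
  obtain ⟨⟨w, hw⟩, huw⟩ := hs.preconnected.exists_adj_of_nontrivial ⟨u, hu⟩
  exact ⟨w, hw, huw⟩

lemma Connected.exists_connected_induce_diff_singleton {s : Set V} [Finite s]
    (hs : (G.induce s).Connected) (hnt : s.Nontrivial) :
    ∃ u ∈ s, (G.induce (s \ {u})).Connected := by
  have := hnt.coe_sort
  obtain ⟨⟨u, hu⟩, hconn⟩ := hs.exists_connected_induce_compl_singleton_of_finite_nontrivial
  let f : (G.induce s).induce {⟨u, hu⟩}ᶜ →g G.induce (s \ {u}) :=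
    ⟨fun a => ⟨a.1.1, a.1.2, fun h => a.2 (Subtype.ext h)⟩, id⟩
  refine ⟨u, hu, hconn.map f ?_⟩
  rintro ⟨a, has, hau⟩
  exact ⟨⟨⟨a, has⟩, fun h => hau (congrArg Subtype.val h)⟩, rfl⟩

theorem exists_split_of_connected_induce [DecidableEq V] {S : Finset V} {v : V}
    (hS : (G.induce (S : Set V)).Connected) (hv : v ∈ S) (hnt : 1 < #S) :
    ∃ A B : Finset V, Disjoint A B ∧ A ∪ B = S ∧ (∃ x ∈ A, G.Adj v x) ∧ v ∈ B ∧
      (G.induce (A : Set V)).Connected ∧ (G.induce (B : Set V)).Connected := by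
  induction S using Finset.strongInduction generalizing v with
  | H S ih =>
  have hSnt : (S : Set V).Nontrivial := one_lt_card_iff_nontrivial.1 hnt
  by_cases hSv : (G.induce (S.erase v : Set V)).Connected
  · obtain ⟨x, hxS, hvx⟩ := exists_adj_of_connected_induce hS hSnt hv
    refine ⟨S.erase v, {v}, disjoint_singleton_right.2 (notMem_erase v S),
      erase_union_eq v S hv, ⟨x, mem_erase.2 ⟨hvx.ne', hxS⟩, hvx⟩, mem_singleton_self v, hSv,
      connected_induce_of_card_eq_one (card_singleton v)⟩
  obtain ⟨u, hu, hSu⟩ := hS.exists_connected_induce_diff_singleton hSnt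
  rw [← coe_erase] at hSu
  have huv : u ≠ v := by rintro rfl; exact hSv hSu
  have hnt' : 1 < #(S.erase u) := by
    by_contra h
    rw [card_erase_of_mem hu] at h
    exact hSv (connected_induce_of_card_eq_one (by rw [card_erase_of_mem hv]; omega))
  obtain ⟨A, B, hAB, hunion, hx, hvB, hA, hB⟩ :=
    ih _ (erase_ssubset hu) hSu (mem_erase.2 ⟨huv.symm, hv⟩) hnt'
  have huAB : u ∉ A ∪ B := by rw [hunion]; exact notMem_erase u S
  have hS_eq : insert u (A ∪ B) = S := by rw [hunion, insert_erase hu]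
  obtain ⟨w, hwS, huw⟩ := exists_adj_of_connected_induce hS hSnt hu
  have hwAB : w ∈ A ∪ B := by rw [hunion]; exact mem_erase.2 ⟨huw.ne', hwS⟩
  rcases mem_union.1 hwAB with hwA | hwB
  · refine ⟨insert u A, B, disjoint_insert_left.2 ⟨fun h => huAB (mem_union_right A h), hAB⟩,
      by rw [insert_union, hS_eq], ?_, hvB, ?_, hB⟩
    · obtain ⟨x, hxA, hvx⟩ := hx
      exact ⟨x, mem_insert_of_mem hxA, hvx⟩
    · rw [coe_insert]
      exact hA.induce_insert hwA huw
  · refine ⟨A, insert u B, disjoint_insert_right.2 ⟨fun h => huAB (mem_union_left B h), hAB⟩,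
      by rw [union_insert, hS_eq], hx, mem_insert_of_mem hvB, hA, ?_⟩
    rw [coe_insert]
    exact hB.induce_insert hwB huw

variable [Fintype V]

open Classical in
noncomputable def connectedSetsAt (G : SimpleGraph V) (v : V) (k : ℕ) : Finset (Finset V) :=
  {S | #S = k ∧ v ∈ S ∧ (G.induce (S : Set V)).Connected}

lemma mem_connectedSetsAt {v : V} {k : ℕ} {S : Finset V} :
    S ∈ G.connectedSetsAt v k ↔ #S = k ∧ v ∈ S ∧ (G.induce (S : Set V)).Connected := by
  simp [connectedSetsAt]

theorem connectedSetsAt_add_two_subset [DecidableEq V] [DecidableRel G.Adj] (v : V) (k : ℕ) :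
    G.connectedSetsAt v (k + 2) ⊆ (antidiagonal k).biUnion fun ij =>
      (G.neighborFinset v).biUnion fun x =>
        (G.connectedSetsAt x (ij.1 + 1) ×ˢ G.connectedSetsAt v (ij.2 + 1)).image
          fun AB => AB.1 ∪ AB.2 := by
  intro S hS
  obtain ⟨hcard, hv, hconn⟩ := mem_connectedSetsAt.1 hS
  obtain ⟨A, B, hAB, rfl, ⟨x, hxA, hvx⟩, hvB, hA, hB⟩ :=
    exists_split_of_connected_induce hconn hv (by omega)
  rw [card_union_of_disjoint hAB] at hcard
  have hApos : 0 < #A := card_pos.2 ⟨x, hxA⟩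
  have hBpos : 0 < #B := card_pos.2 ⟨v, hvB⟩
  simp only [mem_biUnion, mem_image, mem_product, HasAntidiagonal.mem_antidiagonal,
    mem_neighborFinset, mem_connectedSetsAt]
  exact ⟨(#A - 1, #B - 1), by omega, x, hvx, (A, B),
    ⟨⟨(Nat.sub_add_cancel hApos).symm, hxA, hA⟩, (Nat.sub_add_cancel hBpos).symm, hvB, hB⟩, rfl⟩

theorem card_connectedSetsAt_succ_le [DecidableRel G.Adj] {D : ℕ} (hdeg : ∀ v, G.degree v ≤ D)
    (v : V) (k : ℕ) : #(G.connectedSetsAt v (k + 1)) ≤ D ^ k * catalan k := by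
  classical
  induction k using Nat.strong_induction_on generalizing v with
  | h k ih =>
  rcases k with _ | k
  · have h : ∀ S ∈ G.connectedSetsAt v 1, S = {v} := fun S hS => by
      obtain ⟨hS1, hvS, -⟩ := mem_connectedSetsAt.1 hS
      obtain ⟨a, rfl⟩ := card_eq_one.1 hS1
      rw [mem_singleton.1 hvS]
    simpa using card_le_one.2 fun S hS T hT => (h S hS).trans (h T hT).symm
  calc #(G.connectedSetsAt v (k + 2))
      ≤ ∑ ij ∈ antidiagonal k, ∑ x ∈ G.neighborFinset v,
          #(G.connectedSetsAt x (ij.1 + 1)) * #(G.connectedSetsAt v (ij.2 + 1)) := by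
        refine (card_le_card (connectedSetsAt_add_two_subset v k)).trans ?_
        refine card_biUnion_le.trans (sum_le_sum fun ij _ => card_biUnion_le.trans ?_)
        exact sum_le_sum fun x _ => card_image_le.trans (card_product _ _).le
    _ ≤ ∑ ij ∈ antidiagonal k, ∑ x ∈ G.neighborFinset v,
          D ^ ij.1 * catalan ij.1 * (D ^ ij.2 * catalan ij.2) := by
        gcongr with ij hij x
        · exact ih _ (Nat.antidiagonal.fst_lt hij) x
        · exact ih _ (Nat.antidiagonal.snd_lt hij) v
    _ = G.degree v * D ^ k * ∑ ij ∈ antidiagonal k, catalan ij.1 * catalan ij.2 := by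
        rw [mul_sum]
        refine sum_congr rfl fun ij hij => ?_
        rw [sum_const, card_neighborFinset_eq_degree, smul_eq_mul,
          ← HasAntidiagonal.mem_antidiagonal.1 hij, pow_add]
        ring
    _ ≤ D ^ (k + 1) * catalan (k + 1) := by
        rw [catalan_succ', pow_succ']
        gcongr
        exact hdeg v

end SimpleGraph

/-- In a simple graph on `n` vertices with maximum degree at most `D ≥ 1`, for every
`w ≥ 1` the number of `w`-element vertex subsets inducing a connected subgraph is at
most `n · (4D)^w`. -/
theorem card_connected_subsets_le {V : Type*} [Fintype V] (G : SimpleGraph V)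
    [DecidableRel G.Adj] (n D : ℕ) (hn : Fintype.card V = n) (hD : 1 ≤ D)
    (hdeg : ∀ v, G.degree v ≤ D) (w : ℕ) (hw : 1 ≤ w) :
    {S : Finset V | S.card = w ∧ (G.induce (S : Set V)).Connected}.ncard
      ≤ n * (4 * D) ^ w := by
  classical
  obtain ⟨k, rfl⟩ := Nat.exists_eq_add_of_le' hw
  have hcover : {S : Finset V | S.card = k + 1 ∧ (G.induce (S : Set V)).Connected} ⊆
      ↑(univ.biUnion fun v => G.connectedSetsAt v (k + 1)) := by
    rintro S ⟨hcard, hconn⟩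
    obtain ⟨⟨v, hv⟩⟩ := hconn.nonempty
    exact mem_biUnion.2 ⟨v, mem_univ v, SimpleGraph.mem_connectedSetsAt.2 ⟨hcard, hv, hconn⟩⟩
  calc _ ≤ #(univ.biUnion fun v => G.connectedSetsAt v (k + 1)) := by
        simpa only [Set.ncard_coe_finset] using Set.ncard_le_ncard hcover (finite_toSet _)
    _ ≤ ∑ v, #(G.connectedSetsAt v (k + 1)) := card_biUnion_le
    _ ≤ ∑ _v : V, D ^ k * catalan k :=
        sum_le_sum fun v _ => G.card_connectedSetsAt_succ_le hdeg v k
    _ = n * (D ^ k * catalan k) := by rw [sum_const, card_univ, hn, smul_eq_mul]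
    _ ≤ n * (4 * D) ^ (k + 1) := by
        gcongr
        calc D ^ k * catalan k ≤ D ^ k * 4 ^ k := by gcongr; exact catalan_le_four_pow k
          _ = (4 * D) ^ k := by ring
          _ ≤ (4 * D) ^ (k + 1) := Nat.pow_le_pow_right (by omega) k.le_succ
end

section
/- Let G be a simple graph on n vertices with maximum degree at most d, where d ≥ 1. Then for every integer w ≥ 1, the number of 3-trees of size w in G is at most n·(4d³)^w. -/
/-!
A 3-tree is a vertex set that is connected in the graph `H` joining vertices at distance
exactly 3, and every vertex has at most `Δ = d³` such neighbours, being the end of a walk of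
length 3. Connected sets are counted by growing them from a root: call `X` anchored at `S` when
no nonempty part of `X` is cut off from the rest of `S ∪ X`. For `r ∈ S`, either `r` has no
neighbour in `X`, and then `X` is anchored at `S \ {r}`, or `X = insert x X'` with `x` one of the
at most `Δ` neighbours of `r` and `X'` anchored at `insert x S`. The resulting recursion
`a(s, m + 1) ≤ a(s - 1, m + 1) + Δ a(s + 1, m)` is solved by `a(s, m) ≤ 2 ^ s (4Δ) ^ m`, and a
connected set of size `m + 1` is a root together with an `m`-set anchored at it.
-/

/-- The auxiliary graph on a vertex set `W`, joining two vertices of `W` when their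
distance in `G` is exactly `3`. -/
def distThreeGraph {V : Type*} (G : SimpleGraph V) (W : Finset V) :
    SimpleGraph {x // x ∈ W} :=
  SimpleGraph.fromRel (fun a b => G.dist a.1 b.1 = 3)

/-- `W` is a *3-tree* in `G`: the pairwise distances of the vertices of `W` are all at
least `3`, and the auxiliary graph joining vertices of `W` at distance exactly `3`
is connected. -/
def IsThreeTree {V : Type*} (G : SimpleGraph V) (W : Finset V) : Prop :=
  (∀ u ∈ W, ∀ v ∈ W, u ≠ v → 3 ≤ G.edist u v) ∧ (distThreeGraph G W).Connected

open Finset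

namespace SimpleGraph

variable {V : Type*}

def Anchored (H : SimpleGraph V) (S X : Finset V) : Prop :=
  ∀ A ⊆ X, A.Nonempty → ∃ a ∈ A, ∃ b ∉ A, (b ∈ S ∨ b ∈ X) ∧ H.Adj a b

namespace Anchored

variable {H : SimpleGraph V} {S X : Finset V}

lemma eq_empty (h : H.Anchored ∅ X) : X = ∅ := by
  by_contra hX
  obtain ⟨a, -, b, hbX, hb, -⟩ := h X subset_rfl (nonempty_iff_ne_empty.mpr hX)
  simp_all

lemma insert_erase [DecidableEq V] (h : H.Anchored S X) (x : V) :
    H.Anchored (insert x S) (X.erase x) := by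
  intro A hA hne
  obtain ⟨a, ha, b, hbA, hb, hab⟩ := h A (hA.trans (erase_subset x X)) hne
  refine ⟨a, ha, b, hbA, ?_, hab⟩
  by_cases hbx : b = x <;> simp_all

lemma erase_of_forall_not_adj [DecidableEq V] (h : H.Anchored S X) {r : V}
    (hr : ∀ x ∈ X, ¬ H.Adj r x) : H.Anchored (S.erase r) X := by
  intro A hA hne
  obtain ⟨a, ha, b, hbA, hb, hab⟩ := h A hA hne
  refine ⟨a, ha, b, hbA, ?_, hab⟩
  rcases eq_or_ne b r with rfl | hbr
  · exact absurd hab.symm (hr a (hA ha))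
  · simp_all

end Anchored

lemma anchored_erase_of_connected [DecidableEq V] {H : SimpleGraph V} {W : Finset V}
    (hW : (H.induce (W : Set V)).Connected) {r : V} (hr : r ∈ W) :
    H.Anchored {r} (W.erase r) := by
  rintro A hA ⟨a, ha⟩
  have haW : a ∈ W := mem_of_mem_erase (hA ha)
  obtain ⟨p⟩ := hW.preconnected ⟨a, haW⟩ ⟨r, hr⟩
  obtain ⟨d, -, hd₁, hd₂⟩ := p.exists_boundary_dart {x | x.1 ∈ A} ha
    fun hrA => by simpa using hA hrA
  refine ⟨d.fst, hd₁, d.snd, hd₂, ?_, d.adj⟩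
  have hdW := d.snd.2
  by_cases h : d.snd.1 = r <;> simp_all

variable [Fintype V]

open Classical in
noncomputable def anchoredSets (H : SimpleGraph V) (S : Finset V) (m : ℕ) :
    Finset (Finset V) :=
  {X | #X = m ∧ H.Anchored S X}

variable {H : SimpleGraph V}

lemma mem_anchoredSets {S X : Finset V} {m : ℕ} :
    X ∈ H.anchoredSets S m ↔ #X = m ∧ H.Anchored S X := by
  simp [anchoredSets]

lemma anchoredSets_subset_biUnion [DecidableEq V] [DecidableRel H.Adj] {S : Finset V} {r : V}
    (m : ℕ) : H.anchoredSets S (m + 1) ⊆ H.anchoredSets (S.erase r) (m + 1) ∪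
      (H.neighborFinset r).biUnion fun x => (H.anchoredSets (insert x S) m).image (insert x) := by
  intro X hX
  rw [mem_anchoredSets] at hX
  by_cases hadj : ∃ x ∈ X, H.Adj r x
  · obtain ⟨x, hxX, hrx⟩ := hadj
    have hX' : X.erase x ∈ H.anchoredSets (insert x S) m := by
      rw [mem_anchoredSets, card_erase_of_mem hxX, hX.1]
      exact ⟨rfl, hX.2.insert_erase x⟩
    refine mem_union_right _ (mem_biUnion.mpr ⟨x, by simpa using hrx, ?_⟩)
    exact mem_image.mpr ⟨X.erase x, hX', insert_erase hxX⟩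
  · push Not at hadj
    exact mem_union_left _ (mem_anchoredSets.mpr ⟨hX.1, hX.2.erase_of_forall_not_adj hadj⟩)

lemma anchoredSets_zero_subset (S : Finset V) : H.anchoredSets S 0 ⊆ {∅} :=
  fun X hX => by simpa using (mem_anchoredSets.mp hX).1

lemma anchoredSets_empty_succ (m : ℕ) : H.anchoredSets ∅ (m + 1) = ∅ := by
  ext X
  simp only [mem_anchoredSets, notMem_empty, iff_false, not_and]
  rintro hX h
  simp [h.eq_empty] at hX

theorem card_anchoredSets_le [DecidableRel H.Adj] {Δ : ℕ} (hΔ : ∀ v, H.degree v ≤ Δ)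
    (S : Finset V) (m : ℕ) : #(H.anchoredSets S m) ≤ 2 ^ #S * (4 * Δ) ^ m := by
  classical
  induction m generalizing S with
  | zero =>
    calc #(H.anchoredSets S 0) ≤ #({∅} : Finset (Finset V)) :=
          card_le_card (anchoredSets_zero_subset S)
      _ ≤ 2 ^ #S * (4 * Δ) ^ 0 := by simp [Nat.one_le_two_pow]
  | succ m ih =>
    induction S using Finset.strongInduction with
    | H S ihS =>
      obtain rfl | ⟨r, hr⟩ := S.eq_empty_or_nonempty
      · simp [anchoredSets_empty_succ]
      obtain ⟨t, ht⟩ : ∃ t, #S = t + 1 := ⟨#S - 1, by have := card_pos.mpr ⟨r, hr⟩; omega⟩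
      calc #(H.anchoredSets S (m + 1))
          ≤ #(H.anchoredSets (S.erase r) (m + 1)) +
              ∑ x ∈ H.neighborFinset r, #(H.anchoredSets (insert x S) m) :=
            (card_le_card (anchoredSets_subset_biUnion m)).trans <| (card_union_le _ _).trans <|
              by gcongr; exact card_biUnion_le.trans (sum_le_sum fun _ _ => card_image_le)
        _ ≤ 2 ^ t * (4 * Δ) ^ (m + 1) + ∑ _x ∈ H.neighborFinset r, 2 ^ (t + 2) * (4 * Δ) ^ m := by
            gcongr with x
            · simpa [card_erase_of_mem hr, ht] using ihS _ (erase_ssubset hr)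
            · refine (ih _).trans (Nat.mul_le_mul_right _ (Nat.pow_le_pow_right two_pos ?_))
              exact (card_insert_le x S).trans (by omega)
        _ ≤ 2 ^ t * (4 * Δ) ^ (m + 1) + Δ * (2 ^ (t + 2) * (4 * Δ) ^ m) := by
            rw [sum_const, smul_eq_mul]
            gcongr
            exact hΔ r
        _ = 2 ^ #S * (4 * Δ) ^ (m + 1) := by rw [ht]; ring

open Classical in
theorem card_filter_induce_connected_le [DecidableRel H.Adj] {Δ : ℕ}
    (hΔ : ∀ v, H.degree v ≤ Δ) (m : ℕ) :
    #{W : Finset V | #W = m + 1 ∧ (H.induce (W : Set V)).Connected} ≤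
      Fintype.card V * (2 * (4 * Δ) ^ m) := by
  calc #{W : Finset V | #W = m + 1 ∧ (H.induce (W : Set V)).Connected}
      ≤ #(univ.biUnion fun r => (H.anchoredSets {r} m).image (insert r)) := by
        refine card_le_card fun W hW => ?_
        obtain ⟨hcard, hconn⟩ := (mem_filter.mp hW).2
        obtain ⟨⟨r, hr⟩⟩ := hconn.nonempty
        refine mem_biUnion.mpr ⟨r, mem_univ r, mem_image.mpr ⟨W.erase r, ?_, insert_erase hr⟩⟩
        rw [mem_anchoredSets, card_erase_of_mem hr, hcard]
        exact ⟨rfl, anchored_erase_of_connected hconn hr⟩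
    _ ≤ ∑ r : V, #(H.anchoredSets {r} m) :=
        card_biUnion_le.trans (sum_le_sum fun _ _ => card_image_le)
    _ ≤ ∑ _r : V, 2 * (4 * Δ) ^ m :=
        sum_le_sum fun r _ => by simpa using card_anchoredSets_le hΔ {r} m
    _ = Fintype.card V * (2 * (4 * Δ) ^ m) := by rw [sum_const, card_univ, smul_eq_mul]

def distGraph (G : SimpleGraph V) (k : ℕ) : SimpleGraph V :=
  fromRel fun a b => G.dist a b = k

open Classical in
lemma card_filter_exists_walk_length_le (G : SimpleGraph V) [DecidableRel G.Adj] {d : ℕ}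
    (hdeg : ∀ v, G.degree v ≤ d) (u : V) (k : ℕ) :
    #{v | ∃ p : G.Walk u v, p.length = k} ≤ d ^ k := by
  induction k generalizing u with
  | zero =>
    calc #{v | ∃ p : G.Walk u v, p.length = 0} ≤ #{u} :=
          card_le_card fun v hv => by
            obtain ⟨p, hp⟩ := (mem_filter.mp hv).2
            simp [(Walk.eq_of_length_eq_zero hp).symm]
      _ = d ^ 0 := by simp
  | succ k ih =>
    calc #{v | ∃ p : G.Walk u v, p.length = k + 1}
        ≤ #((G.neighborFinset u).biUnion fun x => {v | ∃ p : G.Walk x v, p.length = k}) := by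
          refine card_le_card fun v hv => ?_
          obtain ⟨p, hp⟩ := (mem_filter.mp hv).2
          cases p with
          | nil => simp at hp
          | cons h q =>
            exact mem_biUnion.mpr ⟨_, by simpa using h, by simpa using ⟨q, by simpa using hp⟩⟩
      _ ≤ ∑ _x ∈ G.neighborFinset u, d ^ k :=
          card_biUnion_le.trans (sum_le_sum fun x _ => ih x)
      _ ≤ d ^ (k + 1) := by
          rw [sum_const, smul_eq_mul, pow_succ']
          gcongr
          exact hdeg u

lemma degree_distGraph_le {G : SimpleGraph V} [DecidableRel G.Adj] {d : ℕ}
    (hdeg : ∀ v, G.degree v ≤ d) {k : ℕ} (hk : k ≠ 0) [DecidableRel (G.distGraph k).Adj]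
    (u : V) : (G.distGraph k).degree u ≤ d ^ k := by
  classical
  refine (card_le_card fun v hv => ?_).trans (card_filter_exists_walk_length_le G hdeg u k)
  have hdist : G.dist u v = k := by
    have hadj : (G.distGraph k).Adj u v := (mem_neighborFinset _ _ _).mp hv
    rcases hadj.2 with h | h
    · exact h
    · rwa [dist_comm]
  obtain ⟨p, hp⟩ := exists_walk_of_dist_ne_zero (hdist ▸ hk)
  exact mem_filter.mpr ⟨mem_univ v, p, hp.trans hdist⟩

end SimpleGraph

open SimpleGraph

lemma distThreeGraph_le_induce_distGraph {V : Type*} (G : SimpleGraph V) (W : Finset V) :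
    distThreeGraph G W ≤ (G.distGraph 3).induce (W : Set V) :=
  fun a b h => by
    simp only [distThreeGraph, fromRel_adj] at h
    exact ⟨Subtype.coe_injective.ne h.1, h.2⟩

/-- In a simple graph on `n` vertices with maximum degree at most `d ≥ 1`, for every
`w ≥ 1` the number of 3-trees of size `w` is at most `n · (4d³)^w`. -/
theorem card_threeTrees_le {V : Type*} [Fintype V] (G : SimpleGraph V)
    [DecidableRel G.Adj] (n d : ℕ) (hn : Fintype.card V = n) (hd : 1 ≤ d)
    (hdeg : ∀ v, G.degree v ≤ d) (w : ℕ) (hw : 1 ≤ w) :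
    {W : Finset V | W.card = w ∧ IsThreeTree G W}.ncard ≤ n * (4 * d ^ 3) ^ w := by
  classical
  obtain ⟨m, rfl⟩ : ∃ m, w = m + 1 := ⟨w - 1, by omega⟩
  set H := G.distGraph 3
  have hsub : {W : Finset V | W.card = m + 1 ∧ IsThreeTree G W} ⊆
      (({W : Finset V | #W = m + 1 ∧ (H.induce (W : Set V)).Connected} : Finset _) : Set _) :=
    fun W ⟨hW, hT⟩ => by simpa [hW] using hT.2.mono (distThreeGraph_le_induce_distGraph G W)
  calc _ ≤ #{W : Finset V | #W = m + 1 ∧ (H.induce (W : Set V)).Connected} :=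
        (Set.ncard_le_ncard hsub).trans (Set.ncard_coe_finset _).le
    _ ≤ n * (2 * (4 * d ^ 3) ^ m) :=
        hn ▸ card_filter_induce_connected_le (degree_distGraph_le hdeg (by norm_num)) m
    _ ≤ n * (4 * d ^ 3) ^ (m + 1) := by
        rw [pow_succ' _ m]
        have hd3 := Nat.one_le_pow 3 d hd
        gcongr
        omega
end

section
/- Let G be a simple graph with maximum degree at most d, where d ≥ 2, and let S be a set of s vertices of G such that the subgraph of G induced on S is connected. Then S contains a subset W which is a 3-tree in G of size at least s/d³. -/
namespace SimpleGraph

theorem Preconnected.exists_eq_of_adj_le_add_one {α β : Type*} [LinearOrder β] [Add β] [One β]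
    [SuccAddOrder β] {H : SimpleGraph α} (hH : H.Preconnected) {f : α → β}
    (hf : ∀ a b, H.Adj a b → f a ≤ f b + 1) {n : β} {u v : α} (hu : n ≤ f u) (hv : f v ≤ n) :
    ∃ x, f x = n := by
  rcases hv.eq_or_lt with hv | hv
  · exact ⟨v, hv⟩
  obtain ⟨p⟩ := hH u v
  obtain ⟨e, -, he_fst, he_snd⟩ := p.exists_boundary_dart {x | n ≤ f x} hu hv.not_ge
  exact ⟨e.fst, le_antisymm ((hf _ _ e.adj).trans (Order.add_one_le_of_lt (not_le.mp he_snd)))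
    he_fst⟩

variable {V : Type*} {G : SimpleGraph V}

variable (G) in
noncomputable def infEdist (v : V) (W : Finset V) : ℕ∞ := W.inf (G.edist v)

theorem infEdist_le {v w : V} {W : Finset V} (hw : w ∈ W) : G.infEdist v W ≤ G.edist v w :=
  Finset.inf_le hw

theorem exists_infEdist_eq (v : V) {W : Finset V} (hW : W.Nonempty) :
    ∃ w ∈ W, G.infEdist v W = G.edist v w :=
  W.exists_mem_eq_inf hW _

theorem infEdist_eq_zero {v : V} {W : Finset V} (hv : v ∈ W) : G.infEdist v W = 0 :=
  nonpos_iff_eq_zero.mp (edist_self (G := G) ▸ infEdist_le hv)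

theorem le_infEdist {v : V} {W : Finset V} {n : ℕ∞} :
    n ≤ G.infEdist v W ↔ ∀ w ∈ W, n ≤ G.edist v w :=
  Finset.le_inf_iff

theorem infEdist_lt_iff {v : V} {W : Finset V} {n : ℕ∞} :
    G.infEdist v W < n ↔ ∃ w ∈ W, G.edist v w < n :=
  Finset.inf_lt_iff

theorem Adj.infEdist_le {u v : V} (h : G.Adj u v) (W : Finset V) :
    G.infEdist u W ≤ G.infEdist v W + 1 := by
  rcases W.eq_empty_or_nonempty with rfl | hW
  · simp [infEdist]
  obtain ⟨w, hw, hvw⟩ := exists_infEdist_eq v hW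
  calc G.infEdist u W ≤ G.edist u w := SimpleGraph.infEdist_le hw
    _ ≤ G.edist u v + G.edist v w := SimpleGraph.edist_triangle
    _ = G.infEdist v W + 1 := by rw [edist_eq_one_iff_adj.mpr h, hvw, add_comm]

theorem encard_ball_le [G.LocallyFinite] {d : ℕ} (hdeg : ∀ v, G.degree v ≤ d) (c : V) (r : ℕ) :
    (G.ball c r).encard ≤ ∑ i ∈ Finset.range r, (d : ℕ∞) ^ i := by
  induction r generalizing c with
  | zero => simp
  | succ r ih =>
    have hsub : G.ball c (r + 1) ⊆ insert c (⋃ y ∈ G.neighborFinset c, G.ball y r) := by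
      intro v hv
      rw [mem_ball, edist_comm] at hv
      rcases eq_or_ne c v with rfl | hne
      · exact Set.mem_insert _ _
      obtain ⟨p, hp⟩ := exists_walk_of_edist_ne_top hv.ne_top
      cases p with
      | nil => exact absurd rfl hne
      | @cons _ y _ hcy q =>
        refine Set.mem_insert_of_mem _
          (Set.mem_iUnion₂.mpr ⟨y, (mem_neighborFinset _ _ _).mpr hcy, ?_⟩)
        rw [mem_ball, edist_comm]
        rw [← hp, Walk.length_cons] at hv
        have : q.length + 1 < r + 1 := by exact_mod_cast hv
        exact (edist_le q).trans_lt (by exact_mod_cast Nat.lt_of_add_lt_add_right this)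
    calc (G.ball c (r + 1)).encard
        ≤ (⋃ y ∈ G.neighborFinset c, G.ball y r).encard + 1 :=
          (Set.encard_le_encard (by exact_mod_cast hsub)).trans (Set.encard_insert_le _ _)
      _ ≤ ∑ y ∈ G.neighborFinset c, (G.ball y r).encard + 1 := by
          gcongr; exact Finset.set_encard_biUnion_le _ _
      _ ≤ ∑ y ∈ G.neighborFinset c, ∑ i ∈ Finset.range r, (d : ℕ∞) ^ i + 1 := by
          gcongr with y; exact ih y
      _ ≤ d * ∑ i ∈ Finset.range r, (d : ℕ∞) ^ i + 1 := by
          rw [Finset.sum_const, nsmul_eq_mul, card_neighborFinset_eq_degree]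
          gcongr; exact_mod_cast hdeg c
      _ = ∑ i ∈ Finset.range (r + 1), (d : ℕ∞) ^ i := by
          rw [Finset.sum_range_succ', Finset.mul_sum]; simp [pow_succ, mul_comm]

theorem card_le_mul_of_forall_infEdist_lt [G.LocallyFinite] {d : ℕ} (hdeg : ∀ v, G.degree v ≤ d)
    {S W : Finset V} {r : ℕ} (h : ∀ v ∈ S, G.infEdist v W < r) :
    S.card ≤ W.card * ∑ i ∈ Finset.range r, d ^ i := by
  have hcover : (S : Set V) ⊆ ⋃ w ∈ W, G.ball w r := fun v hv => by
    obtain ⟨w, hw, hvw⟩ := infEdist_lt_iff.mp (h v hv)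
    exact Set.mem_iUnion₂.mpr ⟨w, hw, hvw⟩
  have : (S.card : ℕ∞) ≤ W.card * ∑ i ∈ Finset.range r, (d : ℕ∞) ^ i :=
    calc (S.card : ℕ∞) = (S : Set V).encard := (Set.encard_coe_eq_coe_finsetCard S).symm
      _ ≤ ∑ w ∈ W, (G.ball w r).encard :=
        (Set.encard_le_encard hcover).trans (W.set_encard_biUnion_le _)
      _ ≤ ∑ _w ∈ W, ∑ i ∈ Finset.range r, (d : ℕ∞) ^ i :=
        Finset.sum_le_sum fun w _ => encard_ball_le hdeg w r
      _ = W.card * ∑ i ∈ Finset.range r, (d : ℕ∞) ^ i := by rw [Finset.sum_const, nsmul_eq_mul]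
  exact_mod_cast this

end SimpleGraph

section

open SimpleGraph

variable {V : Type*} {G : SimpleGraph V}

theorem distThreeGraph_connected_iff {W : Finset V} :
    (distThreeGraph G W).Connected ↔
      ((fromRel fun a b => G.dist a b = 3).induce (W : Set V)).Connected :=
  Iso.connected_iff
    { toEquiv := Equiv.refl _
      map_rel_iff' {a b} := by
        simp only [distThreeGraph, fromRel_adj, comap_adj, Function.Embedding.subtype_apply,
          ne_eq, Subtype.ext_iff]
        rfl }

theorem IsThreeTree.nonempty {W : Finset V} (hW : IsThreeTree G W) : W.Nonempty :=
  let ⟨⟨w, hw⟩⟩ := hW.2.nonempty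
  ⟨w, hw⟩

theorem isThreeTree_singleton (v : V) : IsThreeTree G {v} := by
  refine ⟨fun u hu w hw huw => ?_, ?_⟩
  · rw [Finset.mem_singleton] at hu hw
    exact absurd (hu.trans hw.symm) huw
  rw [distThreeGraph_connected_iff, Finset.coe_singleton, connected_iff]
  exact ⟨Preconnected.of_subsingleton, inferInstance⟩

theorem IsThreeTree.insert [DecidableEq V] {W : Finset V} (hW : IsThreeTree G W) {x : V}
    (hx : G.infEdist x W = 3) : IsThreeTree G (insert x W) := by
  have hfar : ∀ w ∈ W, 3 ≤ G.edist x w := le_infEdist.mp hx.ge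
  obtain ⟨w, hw, hxw⟩ := exists_infEdist_eq x hW.nonempty
  rw [hx] at hxw
  refine ⟨?_, ?_⟩
  · intro u hu v hv huv
    rcases Finset.mem_insert.mp hu with rfl | hu' <;> rcases Finset.mem_insert.mp hv with rfl | hv'
    exacts [absurd rfl huv, hfar v hv', edist_comm (G := G) ▸ hfar u hu', hW.1 u hu' v hv' huv]
  · have hadj : (fromRel fun a b => G.dist a b = 3).Adj x w := by
      refine (fromRel_adj _ _ _).mpr ⟨fun h => ?_, Or.inl (by simp [SimpleGraph.dist, ← hxw])⟩
      simp [h] at hxw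
    rw [distThreeGraph_connected_iff, Finset.coe_insert, Set.insert_eq]
    exact connected_induce_union Preconnected.of_subsingleton
      (distThreeGraph_connected_iff.mp hW.2).preconnected rfl hw hadj

theorem exists_maximal_isThreeTree_subset {S : Finset V} (hS : S.Nonempty) :
    ∃ W, Maximal (fun W => W ⊆ S ∧ IsThreeTree G W) W := by
  classical
  obtain ⟨v, hv⟩ := hS
  obtain ⟨W, hW⟩ := (S.powerset.filter (IsThreeTree G)).exists_maximal
    ⟨{v}, by simp [hv, isThreeTree_singleton]⟩
  exact ⟨W, by simpa using hW⟩

theorem infEdist_lt_three_of_maximal_isThreeTree {S W : Finset V}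
    (hS : (G.induce (S : Set V)).Connected) (hW : Maximal (fun W => W ⊆ S ∧ IsThreeTree G W) W)
    {v : V} (hv : v ∈ S) : G.infEdist v W < 3 := by
  classical
  by_contra! hfar
  obtain ⟨hWS, hW3⟩ := hW.prop
  obtain ⟨w, hw⟩ := hW3.nonempty
  obtain ⟨⟨x, hxS⟩, hx⟩ := hS.preconnected.exists_eq_of_adj_le_add_one
    (f := fun y => G.infEdist y W) (fun a b hab => Adj.infEdist_le (G := G) hab W)
    (u := ⟨v, hv⟩) (v := ⟨w, hWS hw⟩) hfar (by simp [infEdist_eq_zero hw])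
  have hxW : x ∉ W := fun hxW => by simp [infEdist_eq_zero hxW] at hx
  have hgrow : insert x W = W :=
    hW.eq_of_ge ⟨Finset.insert_subset hxS hWS, hW3.insert hx⟩ (Finset.subset_insert x W)
  exact hxW (hgrow ▸ Finset.mem_insert_self x W)

end

/-- In a simple graph of maximum degree at most `d ≥ 2`, any set `S` of `s` vertices
inducing a connected subgraph contains a 3-tree of size at least `s/d³`. -/
theorem connected_contains_large_threeTree {V : Type*} [Fintype V] (G : SimpleGraph V)
    [DecidableRel G.Adj] (d : ℕ) (hd : 2 ≤ d) (hdeg : ∀ v, G.degree v ≤ d)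
    (S : Finset V) (s : ℕ) (hs : S.card = s) (hconn : (G.induce (S : Set V)).Connected) :
    ∃ W ⊆ S, IsThreeTree G W ∧ (s : ℝ) / (d : ℝ) ^ 3 ≤ (W.card : ℝ) := by
  obtain ⟨⟨v, hv⟩⟩ := hconn.nonempty
  obtain ⟨W, hW⟩ := exists_maximal_isThreeTree_subset (G := G) ⟨v, hv⟩
  refine ⟨W, hW.prop.1, hW.prop.2, ?_⟩
  have hcount : s ≤ W.card * ∑ i ∈ Finset.range 3, d ^ i :=
    hs ▸ SimpleGraph.card_le_mul_of_forall_infEdist_lt hdeg fun v hv =>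
      infEdist_lt_three_of_maximal_isThreeTree hconn hW hv
  have hball : ∑ i ∈ Finset.range 3, d ^ i ≤ d ^ 3 := by
    simp only [Finset.sum_range_succ, Finset.sum_range_zero]
    nlinarith
  rw [div_le_iff₀ (by positivity)]
  exact_mod_cast hcount.trans (Nat.mul_le_mul_left _ hball)
end

section
/- Let H = (V,E) be a k-uniform hypergraph (every hyperedge contains exactly k vertices) in which each hyperedge intersects at most d other hyperedges (two hyperedges intersect if they share at least one vertex). If e·(d+1) ≤ 2^{k−1}, where e is Euler's number, then H is two-colorable: there exists a map c: V → {red, blue} such that no hyperedge of H is monochromatic. -/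
open Finset

section Counting

lemma count_const_on {W : Type*} [Fintype W] [DecidableEq W] (A : Finset W) (b : Bool) :
    (Finset.univ.filter fun c : W → Bool => ∀ x ∈ A, c x = b).card
      = 2 ^ (Fintype.card W - A.card) := by
  have h := Finset.card_bij'
    (i := fun (c : W → Bool) (_ : c ∈ Finset.univ.filter fun c : W → Bool => ∀ x ∈ A, c x = b)
      => (fun x : {x // x ∉ A} => c x.1))
    (j := fun (g : {x // x ∉ A} → Bool) (_ : g ∈ (Finset.univ : Finset ({x // x ∉ A} → Bool)))
      => (fun x : W => if h : x ∉ A then g ⟨x, h⟩ else b))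
    (hi := fun c hc => Finset.mem_univ _)
    (hj := ?_) ?_ ?_
  · rw [h]
    rw [Finset.card_univ, Fintype.card_fun, Fintype.card_bool]
    congr 1
    rw [Fintype.card_subtype_compl]
    simp [Fintype.card_coe]
  · intro g _
    simp only [Finset.mem_filter, Finset.mem_univ, true_and]
    intro x hx
    simp [hx]
  · intro c hc
    simp only [Finset.mem_filter, Finset.mem_univ, true_and] at hc
    funext x
    by_cases hx : x ∈ A
    · simp [hx, hc x hx]
    · simp [hx]
  · intro g _
    funext x
    simp [x.2]

lemma count_mono_aux {W : Type*} [Fintype W] [DecidableEq W] (A : Finset W) (hA : A.Nonempty) :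
    (Finset.univ.filter fun c : W → Bool =>
        (∀ x ∈ A, c x = true) ∨ (∀ x ∈ A, c x = false)).card * 2 ^ A.card
      = 2 * 2 ^ Fintype.card W := by
  rw [Finset.filter_or, Finset.card_union_of_disjoint, count_const_on, count_const_on]
  · have hle : A.card ≤ Fintype.card W := by
      simpa [Fintype.card_coe] using Finset.card_le_univ A
    have h : (2:ℕ) ^ (Fintype.card W - A.card) * 2 ^ A.card = 2 ^ Fintype.card W := by
      rw [← pow_add, Nat.sub_add_cancel hle]
    ring_nf
    rw [h]
  · rw [Finset.disjoint_left]
    rintro c hc hc'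
    simp only [Finset.mem_filter, Finset.mem_univ, true_and] at hc hc'
    obtain ⟨x, hx⟩ := hA
    have := hc x hx
    have := hc' x hx
    simp_all

lemma indep_count {W : Type*} [Fintype W] [DecidableEq W] (A : Finset W)
    (P Q : (W → Bool) → Prop) [DecidablePred P] [DecidablePred Q]
    (hP : ∀ c c', (∀ x ∈ A, c x = c' x) → P c → P c')
    (hQ : ∀ c c', (∀ x ∉ A, c x = c' x) → Q c → Q c') :
    (Finset.univ.filter P).card * (Finset.univ.filter Q).card
      = (Finset.univ.filter fun c => P c ∧ Q c).card * 2 ^ Fintype.card W := by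
  classical
  have key : ((Finset.univ.filter P) ×ˢ (Finset.univ.filter Q)).card
      = ((Finset.univ.filter fun c => P c ∧ Q c) ×ˢ (Finset.univ : Finset (W → Bool))).card := by
    refine Finset.card_bij'
      (fun p _ => ((fun x => if x ∈ A then p.1 x else p.2 x),
                   (fun x => if x ∈ A then p.2 x else p.1 x)))
      (fun p _ => ((fun x => if x ∈ A then p.1 x else p.2 x),
                   (fun x => if x ∈ A then p.2 x else p.1 x))) ?_ ?_ ?_ ?_
    · rintro ⟨c, c'⟩ h
      simp only [Finset.mem_product, Finset.mem_filter, Finset.mem_univ, true_and] at h ⊢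
      exact ⟨⟨hP c _ (fun x hx => by simp [hx]) h.1, hQ c' _ (fun x hx => by simp [hx]) h.2⟩, trivial⟩
    · rintro ⟨m, z⟩ h
      simp only [Finset.mem_product, Finset.mem_filter, Finset.mem_univ, true_and, and_true] at h ⊢
      exact ⟨hP m _ (fun x hx => by simp [hx]) h.1, hQ m _ (fun x hx => by simp [hx]) h.2⟩
    · rintro ⟨c, c'⟩ _
      refine Prod.ext ?_ ?_ <;> funext x <;> by_cases hx : x ∈ A <;> simp [hx]
    · rintro ⟨m, z⟩ _
      refine Prod.ext ?_ ?_ <;> funext x <;> by_cases hx : x ∈ A <;> simp [hx]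
  simpa [Finset.card_product, Finset.card_univ, Fintype.card_fun] using key

end Counting

section Numeric

lemma lll_k_pos {k d : ℕ} (hLLL : Real.exp 1 * ((d : ℝ) + 1) ≤ 2 ^ (k - 1)) : 1 ≤ k := by
  by_contra h
  push_neg at h
  interval_cases k
  · simp only [Nat.zero_sub, pow_zero] at hLLL
    have h1 : (2.7182818283 : ℝ) < Real.exp 1 := Real.exp_one_gt_d9
    have h2 : (1:ℝ) ≤ (d:ℝ) + 1 := by
      have : (0:ℝ) ≤ (d:ℝ) := Nat.cast_nonneg d
      linarith
    nlinarith [Real.exp_pos 1]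

lemma lll_numeric (d k : ℕ) (hLLL : Real.exp 1 * ((d : ℝ) + 1) ≤ 2 ^ (k - 1)) :
    (2:ℝ) / 2 ^ k ≤ (1 / ((d:ℝ) + 2)) * (((d:ℝ) + 1) / ((d:ℝ) + 2)) ^ d := by
  have hk : 1 ≤ k := lll_k_pos hLLL
  have hd2 : (0:ℝ) < (d:ℝ) + 2 := by positivity
  have hd1 : (0:ℝ) < (d:ℝ) + 1 := by positivity
  have hePos : (0:ℝ) < Real.exp 1 := Real.exp_pos 1
  have hexp : (((d:ℝ) + 2) / ((d:ℝ) + 1)) ^ (d + 1) ≤ Real.exp 1 := by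
    have h1 : ((d:ℝ) + 2) / ((d:ℝ) + 1) ≤ Real.exp (1 / ((d:ℝ) + 1)) := by
      have h := Real.add_one_le_exp (1 / ((d:ℝ) + 1))
      have heq : ((d:ℝ) + 2) / ((d:ℝ) + 1) = 1 / ((d:ℝ) + 1) + 1 := by
        field_simp; ring
      rw [heq]; exact h
    have h2 : (((d:ℝ) + 2) / ((d:ℝ) + 1)) ^ (d + 1)
        ≤ Real.exp (1 / ((d:ℝ) + 1)) ^ (d + 1) :=
      pow_le_pow_left₀ (by positivity) h1 _
    refine h2.trans ?_
    rw [← Real.exp_nat_mul]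
    apply Real.exp_le_exp.2
    rw [Nat.cast_add, Nat.cast_one, mul_one_div, div_self (by positivity)]
  have h2k : (2:ℝ) ^ k = 2 ^ (k - 1) * 2 := by
    rw [← pow_succ, Nat.sub_add_cancel hk]
  have hp : (2:ℝ) / 2 ^ k ≤ 1 / (Real.exp 1 * ((d:ℝ) + 1)) := by
    rw [h2k, div_le_div_iff₀ (by positivity) (by positivity)]
    nlinarith
  refine hp.trans ?_
  have hx : ((d:ℝ)+2) ^ (d+1) ≤ Real.exp 1 * ((d:ℝ)+1) ^ (d+1) := by
    rw [div_pow, div_le_iff₀ (by positivity)] at hexp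
    linarith
  have hrhs : (1 / ((d:ℝ)+2)) * (((d:ℝ)+1)/((d:ℝ)+2))^d
      = ((d:ℝ)+1)^d / ((d:ℝ)+2)^(d+1) := by
    rw [div_pow, pow_succ]
    field_simp
  rw [hrhs, div_le_div_iff₀ (by positivity) (by positivity)]
  calc 1 * ((d:ℝ)+2)^(d+1) = ((d:ℝ)+2)^(d+1) := one_mul _
    _ ≤ Real.exp 1 * ((d:ℝ)+1)^(d+1) := hx
    _ = ((d:ℝ)+1)^d * (Real.exp 1 * ((d:ℝ)+1)) := by rw [pow_succ]; ring

end Numeric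

section Setup

variable {V : Type*} [DecidableEq V]

set_option linter.unusedSectionVars false

def monoOn (f : Finset V) (c : V → Bool) : Prop :=
  (∀ x ∈ f, c x = true) ∨ (∀ x ∈ f, c x = false)

instance (f : Finset V) (c : V → Bool) : Decidable (monoOn f c) :=
  inferInstanceAs (Decidable (_ ∨ _))

def extU (U : Finset V) (c : {x // x ∈ U} → Bool) : V → Bool :=
  fun v => if h : v ∈ U then c ⟨v, h⟩ else true

lemma monoOn_congr {f : Finset V} {c c' : V → Bool} (h : ∀ x ∈ f, c x = c' x) :
    monoOn f c → monoOn f c' := by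
  rintro (hm | hm)
  · exact Or.inl fun x hx => (h x hx).symm.trans (hm x hx)
  · exact Or.inr fun x hx => (h x hx).symm.trans (hm x hx)

def goodCard (U : Finset V) (T : Finset (Finset V)) : ℕ :=
  (Finset.univ.filter fun c : {x // x ∈ U} → Bool => ∀ f ∈ T, ¬ monoOn f (extU U c)).card

def monoGoodCard (U : Finset V) (e : Finset V) (T : Finset (Finset V)) : ℕ :=
  (Finset.univ.filter fun c : {x // x ∈ U} → Bool =>
    monoOn e (extU U c) ∧ ∀ f ∈ T, ¬ monoOn f (extU U c)).card

def monoCard (U : Finset V) (e : Finset V) : ℕ :=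
  (Finset.univ.filter fun c : {x // x ∈ U} → Bool => monoOn e (extU U c)).card

lemma goodCard_split (U : Finset V) (f : Finset V) (T : Finset (Finset V)) :
    goodCard U T = monoGoodCard U f T + goodCard U (insert f T) := by
  unfold goodCard monoGoodCard
  rw [← Finset.card_filter_add_card_filter_not
    (p := fun c : {x // x ∈ U} → Bool => monoOn f (extU U c))]
  congr 1
  · rw [Finset.filter_filter]
    refine congrArg Finset.card (Finset.filter_congr ?_)
    intro c _
    constructor <;> (intro h; tauto)
  · rw [Finset.filter_filter]
    refine congrArg Finset.card (Finset.filter_congr ?_)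
    intro c _
    simp only [Finset.forall_mem_insert]
    constructor <;> (intro h; tauto)

lemma monoGoodCard_anti (U : Finset V) (e : Finset V) {T T' : Finset (Finset V)}
    (h : T' ⊆ T) : monoGoodCard U e T ≤ monoGoodCard U e T' := by
  apply Finset.card_le_card
  intro c hc
  simp only [Finset.mem_filter, Finset.mem_univ, true_and] at hc ⊢
  exact ⟨hc.1, fun f hf => hc.2 f (h hf)⟩

lemma card_coords (U : Finset V) (e : Finset V) (he : e ⊆ U) :
    (Finset.univ.filter fun x : {x // x ∈ U} => ↑x ∈ e).card = e.card := by
  refine Finset.card_bij' (fun x _ => (↑x : V)) (fun v hv => ⟨v, he hv⟩) ?_ ?_ ?_ ?_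
  · intro x hx
    simpa using (Finset.mem_filter.1 hx).2
  · intro v hv
    simp [hv]
  · intro x _
    rfl
  · intro v _
    rfl

lemma monoCard_eq (U : Finset V) (e : Finset V) (he : e ⊆ U) (hne : e.Nonempty) :
    monoCard U e * 2 ^ e.card = 2 * 2 ^ U.card := by
  have hA : (Finset.univ.filter fun x : {x // x ∈ U} => ↑x ∈ e).Nonempty := by
    obtain ⟨v, hv⟩ := hne
    exact ⟨⟨v, he hv⟩, by simp [hv]⟩
  have h := count_mono_aux (Finset.univ.filter fun x : {x // x ∈ U} => ↑x ∈ e) hA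
  rw [card_coords U e he] at h
  have hfilter : (Finset.univ.filter fun c : {x // x ∈ U} → Bool =>
      (∀ x ∈ Finset.univ.filter fun x : {x // x ∈ U} => ↑x ∈ e, c x = true) ∨
      (∀ x ∈ Finset.univ.filter fun x : {x // x ∈ U} => ↑x ∈ e, c x = false))
      = Finset.univ.filter fun c : {x // x ∈ U} → Bool => monoOn e (extU U c) := by
    apply Finset.filter_congr
    intro c _
    have key : ∀ b : Bool,
        ((∀ x ∈ Finset.univ.filter fun x : {x // x ∈ U} => ↑x ∈ e, c x = b)
          ↔ (∀ v ∈ e, extU U c v = b)) := by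
      intro b
      constructor
      · intro h' v hv
        have hvU : v ∈ U := he hv
        have := h' ⟨v, hvU⟩ (by simp [hv])
        simpa [extU, hvU] using this
      · intro h' x hx
        simp only [Finset.mem_filter, Finset.mem_univ, true_and] at hx
        have := h' ↑x hx
        simpa [extU, x.2] using this
    simp only [monoOn, key]
  rw [hfilter] at h
  rw [show Fintype.card {x // x ∈ U} = U.card from Fintype.card_coe U] at h
  exact h

end Setup

section Main

variable {V : Type*} [DecidableEq V]

set_option linter.unusedSectionVars false

lemma indep_spec (U e : Finset V) (he : e ⊆ U) (T : Finset (Finset V))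
    (hT : ∀ f ∈ T, f ⊆ U) (hdisj : ∀ f ∈ T, ¬ (e ∩ f).Nonempty) :
    monoCard U e * goodCard U T = monoGoodCard U e T * 2 ^ U.card := by
  have h := indep_count (W := {x // x ∈ U})
    (A := Finset.univ.filter fun x : {x // x ∈ U} => ↑x ∈ e)
    (P := fun c => monoOn e (extU U c))
    (Q := fun c => ∀ f ∈ T, ¬ monoOn f (extU U c)) ?_ ?_
  · rw [show Fintype.card {x // x ∈ U} = U.card from Fintype.card_coe U] at h
    exact h
  · intro c c' hcc hm
    refine monoOn_congr (fun v hv => ?_) hm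
    have hvU : v ∈ U := he hv
    have := hcc ⟨v, hvU⟩ (by simp [hv])
    simp [extU, hvU, this]
  · intro c c' hcc hg f hf hm
    refine hg f hf (monoOn_congr (fun v hv => ?_) hm)
    have hvU : v ∈ U := hT f hf hv
    have hve : v ∉ e := fun hve => hdisj f hf ⟨v, Finset.mem_inter.2 ⟨hve, hv⟩⟩
    have := hcc ⟨v, hvU⟩ (by simp [hve])
    simp [extU, hvU, this]

lemma lll_main (E : Finset (Finset V)) (U : Finset V)
    (hUE : ∀ f ∈ E, f ⊆ U) (k d : ℕ)
    (huniform : ∀ e ∈ E, e.card = k)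
    (hinter : ∀ e ∈ E, (E.filter (fun f => f ≠ e ∧ (e ∩ f).Nonempty)).card ≤ d)
    (hLLL : Real.exp 1 * ((d : ℝ) + 1) ≤ 2 ^ (k - 1)) :
    ∀ n : ℕ, ∀ S : Finset (Finset V), S ⊆ E → S.card ≤ n → ∀ e ∈ E,
      (monoGoodCard U e S : ℝ) ≤ (1/((d:ℝ)+2)) * goodCard U S := by
  intro n
  induction n using Nat.strong_induction_on with
  | _ n ih =>
  intro S hSE hSn e he
  by_cases heS : e ∈ S
  · have h0 : monoGoodCard U e S = 0 := by
      unfold monoGoodCard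
      rw [Finset.card_eq_zero, Finset.filter_eq_empty_iff]
      rintro c - ⟨h1, h2⟩
      exact h2 e heS h1
    rw [h0]
    push_cast
    positivity
  · have hx0 : (0:ℝ) ≤ 1/((d:ℝ)+2) := by positivity
    have hq0 : (0:ℝ) < ((d:ℝ)+1)/((d:ℝ)+2) := by positivity
    have hq1 : ((d:ℝ)+1)/((d:ℝ)+2) ≤ 1 := by
      rw [div_le_one (by positivity)]; linarith
    have hqx : 1 - 1/((d:ℝ)+2) = ((d:ℝ)+1)/((d:ℝ)+2) := by field_simp; ring
    set S1 := S.filter (fun f => (e ∩ f).Nonempty) with hS1def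
    set S2 := S.filter (fun f => ¬ (e ∩ f).Nonempty) with hS2def
    have hS1S2 : S1 ∪ S2 = S := Finset.filter_union_filter_not_eq _ S
    have hS1S : S1 ⊆ S := Finset.filter_subset _ S
    have hS2S : S2 ⊆ S := Finset.filter_subset _ S
    have hS1card : S1.card ≤ d := by
      refine le_trans (Finset.card_le_card ?_) (hinter e he)
      intro f hf
      rw [hS1def, Finset.mem_filter] at hf
      rw [Finset.mem_filter]
      exact ⟨hSE hf.1, fun hfe => heS (hfe ▸ hf.1), hf.2⟩
    have hkpos : 1 ≤ k := lll_k_pos hLLL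
    have hene : e.Nonempty := by
      rw [← Finset.card_pos, huniform e he]
      omega
    have hmc : monoCard U e * 2 ^ e.card = 2 * 2 ^ U.card :=
      monoCard_eq U e (hUE e he) hene
    rw [huniform e he] at hmc
    have hindep : monoCard U e * goodCard U S2 = monoGoodCard U e S2 * 2 ^ U.card :=
      indep_spec U e (hUE e he) S2
        (fun f hf => hUE f (hSE (hS2S hf)))
        (fun f hf => (Finset.mem_filter.1 hf).2)
    have h2kpos : (0:ℝ) < 2 ^ k := by positivity
    have hNpos : (0:ℝ) < 2 ^ U.card := by positivity
    have hr : (monoGoodCard U e S2 : ℝ) * 2 ^ k = 2 * goodCard U S2 := by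
      have h1 : (monoCard U e : ℝ) * goodCard U S2 = monoGoodCard U e S2 * 2 ^ U.card := by
        exact_mod_cast hindep
      have h2 : (monoCard U e : ℝ) * 2 ^ k = 2 * 2 ^ U.card := by
        exact_mod_cast hmc
      have key : ((monoGoodCard U e S2 : ℝ) * 2 ^ k) * 2 ^ U.card
          = (2 * (goodCard U S2 : ℝ)) * 2 ^ U.card := by
        linear_combination (goodCard U S2 : ℝ) * h2 - (2:ℝ)^k * h1
      exact mul_right_cancel₀ (ne_of_gt hNpos) key
    -- peeling
    have peel : ∀ T : Finset (Finset V), T ⊆ S1 →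
        (((d:ℝ)+1)/((d:ℝ)+2)) ^ T.card * (goodCard U S2 : ℝ) ≤ (goodCard U (S2 ∪ T) : ℝ) := by
      intro T
      induction T using Finset.induction_on with
      | empty => intro _; simp
      | @insert f T hfT ihT =>
        intro hsub
        have hT : T ⊆ S1 := (Finset.subset_insert f T).trans hsub
        have hfS1 : f ∈ S1 := hsub (Finset.mem_insert_self f T)
        have hfS : f ∈ S := hS1S hfS1
        have hfE : f ∈ E := hSE hfS
        have hfnS2 : f ∉ S2 := by
          intro hf2
          exact (Finset.mem_filter.1 hf2).2 (Finset.mem_filter.1 hfS1).2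
        have hS2T_S : S2 ∪ T ⊆ S := by
          intro g hg
          rcases Finset.mem_union.1 hg with h' | h'
          · exact hS2S h'
          · exact hS1S (hT h')
        have hproper : (S2 ∪ T) ⊂ S := by
          refine (Finset.ssubset_iff_of_subset hS2T_S).2 ⟨f, hfS, ?_⟩
          intro hf
          rcases Finset.mem_union.1 hf with h' | h'
          · exact hfnS2 h'
          · exact hfT h'
        have hcardlt : (S2 ∪ T).card < n := lt_of_lt_of_le (Finset.card_lt_card hproper) hSn
        have hIH : (monoGoodCard U f (S2 ∪ T) : ℝ) ≤ (1/((d:ℝ)+2)) * goodCard U (S2 ∪ T) :=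
          ih (S2 ∪ T).card hcardlt (S2 ∪ T) (hS2T_S.trans hSE) le_rfl f hfE
        have hsplit : goodCard U (S2 ∪ T)
            = monoGoodCard U f (S2 ∪ T) + goodCard U (insert f (S2 ∪ T)) :=
          goodCard_split U f (S2 ∪ T)
        have hstep : (1 - 1/((d:ℝ)+2)) * (goodCard U (S2 ∪ T) : ℝ)
            ≤ goodCard U (insert f (S2 ∪ T)) := by
          have hs : (goodCard U (S2 ∪ T) : ℝ)
              = monoGoodCard U f (S2 ∪ T) + goodCard U (insert f (S2 ∪ T)) := by
            exact_mod_cast hsplit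
          linarith
        have hunion : S2 ∪ insert f T = insert f (S2 ∪ T) := Finset.union_insert f S2 T
        rw [hunion, Finset.card_insert_of_notMem hfT]
        calc (((d:ℝ)+1)/((d:ℝ)+2)) ^ (T.card + 1) * (goodCard U S2 : ℝ)
            = (((d:ℝ)+1)/((d:ℝ)+2)) * ((((d:ℝ)+1)/((d:ℝ)+2)) ^ T.card * goodCard U S2) := by
              ring
          _ ≤ (((d:ℝ)+1)/((d:ℝ)+2)) * goodCard U (S2 ∪ T) :=
              mul_le_mul_of_nonneg_left (ihT hT) (le_of_lt hq0)
          _ = (1 - 1/((d:ℝ)+2)) * goodCard U (S2 ∪ T) := by rw [hqx]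
          _ ≤ goodCard U (insert f (S2 ∪ T)) := hstep
    have hpeel : (((d:ℝ)+1)/((d:ℝ)+2)) ^ S1.card * (goodCard U S2 : ℝ) ≤ goodCard U S := by
      have h := peel S1 (Finset.Subset.refl S1)
      rwa [Finset.union_comm, hS1S2] at h
    have hmono_le : (monoGoodCard U e S : ℝ) ≤ monoGoodCard U e S2 := by
      exact_mod_cast monoGoodCard_anti U e hS2S
    have hM2 : (monoGoodCard U e S2 : ℝ) = 2 / 2 ^ k * goodCard U S2 := by
      rw [div_mul_eq_mul_div, eq_div_iff (ne_of_gt h2kpos)]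
      linarith [hr]
    have hnum : (2:ℝ)/2^k ≤ (1/((d:ℝ)+2)) * (((d:ℝ)+1)/((d:ℝ)+2))^d :=
      lll_numeric d k hLLL
    have hqd : (((d:ℝ)+1)/((d:ℝ)+2))^d ≤ (((d:ℝ)+1)/((d:ℝ)+2))^S1.card :=
      pow_le_pow_of_le_one (le_of_lt hq0) hq1 hS1card
    have hGnn : (0:ℝ) ≤ goodCard U S := Nat.cast_nonneg _
    have hqs1 : (0:ℝ) < (((d:ℝ)+1)/((d:ℝ)+2))^S1.card := pow_pos hq0 _
    have main : (monoGoodCard U e S : ℝ) * (((d:ℝ)+1)/((d:ℝ)+2))^S1.card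
        ≤ ((1/((d:ℝ)+2)) * goodCard U S) * (((d:ℝ)+1)/((d:ℝ)+2))^S1.card := by
      calc (monoGoodCard U e S : ℝ) * (((d:ℝ)+1)/((d:ℝ)+2))^S1.card
          ≤ (monoGoodCard U e S2 : ℝ) * (((d:ℝ)+1)/((d:ℝ)+2))^S1.card :=
            mul_le_mul_of_nonneg_right hmono_le (le_of_lt hqs1)
        _ = (2/2^k) * ((((d:ℝ)+1)/((d:ℝ)+2))^S1.card * goodCard U S2) := by
            rw [hM2]; ring
        _ ≤ (2/2^k) * goodCard U S :=
            mul_le_mul_of_nonneg_left hpeel (by positivity)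
        _ ≤ ((1/((d:ℝ)+2)) * (((d:ℝ)+1)/((d:ℝ)+2))^d) * goodCard U S :=
            mul_le_mul_of_nonneg_right hnum hGnn
        _ = (1/((d:ℝ)+2)) * ((((d:ℝ)+1)/((d:ℝ)+2))^d * goodCard U S) := by ring
        _ ≤ (1/((d:ℝ)+2)) * ((((d:ℝ)+1)/((d:ℝ)+2))^S1.card * goodCard U S) :=
            mul_le_mul_of_nonneg_left (mul_le_mul_of_nonneg_right hqd hGnn) hx0
        _ = ((1/((d:ℝ)+2)) * goodCard U S) * (((d:ℝ)+1)/((d:ℝ)+2))^S1.card := by ring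
    exact le_of_mul_le_mul_right main hqs1

lemma good_pos (E : Finset (Finset V)) (U : Finset V)
    (hUE : ∀ f ∈ E, f ⊆ U) (k d : ℕ)
    (huniform : ∀ e ∈ E, e.card = k)
    (hinter : ∀ e ∈ E, (E.filter (fun f => f ≠ e ∧ (e ∩ f).Nonempty)).card ≤ d)
    (hLLL : Real.exp 1 * ((d : ℝ) + 1) ≤ 2 ^ (k - 1)) :
    ∀ n : ℕ, ∀ S : Finset (Finset V), S ⊆ E → S.card ≤ n → 0 < goodCard U S := by
  intro n
  induction n with
  | zero =>
    intro S hSE hS0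
    have hS : S = ∅ := Finset.card_eq_zero.1 (Nat.le_zero.1 hS0)
    subst hS
    unfold goodCard
    have h : (Finset.univ.filter fun c : {x // x ∈ U} → Bool =>
        ∀ f ∈ (∅ : Finset (Finset V)), ¬ monoOn f (extU U c)) = Finset.univ := by
      apply Finset.filter_true_of_mem
      intro c _ f hf
      exact absurd hf (Finset.notMem_empty f)
    rw [h, Finset.card_univ]
    exact Fintype.card_pos
  | succ n ihn =>
    intro S hSE hScard
    rcases S.eq_empty_or_nonempty with rfl | ⟨e, heS⟩
    · exact ihn ∅ (Finset.empty_subset E) (by simp)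
    · have hS'card : (S.erase e).card ≤ n := by
        rw [Finset.card_erase_of_mem heS]
        omega
      have hS'E : S.erase e ⊆ E := (Finset.erase_subset e S).trans hSE
      have hpos : 0 < goodCard U (S.erase e) := ihn _ hS'E hS'card
      have hIH : (monoGoodCard U e (S.erase e) : ℝ)
          ≤ (1/((d:ℝ)+2)) * goodCard U (S.erase e) :=
        lll_main E U hUE k d huniform hinter hLLL (S.erase e).card (S.erase e) hS'E le_rfl
          e (hSE heS)
      have hsplit : goodCard U (S.erase e)
          = monoGoodCard U e (S.erase e) + goodCard U (insert e (S.erase e)) :=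
        goodCard_split U e (S.erase e)
      rw [Finset.insert_erase heS] at hsplit
      have hs : (goodCard U (S.erase e) : ℝ)
          = monoGoodCard U e (S.erase e) + goodCard U S := by exact_mod_cast hsplit
      have hp : (0:ℝ) < goodCard U (S.erase e) := by exact_mod_cast hpos
      have hx1 : (1:ℝ)/((d:ℝ)+2) < 1 := by
        rw [div_lt_one (by positivity)]
        have : (0:ℝ) ≤ (d:ℝ) := Nat.cast_nonneg d
        linarith
      have hfinal : (0:ℝ) < goodCard U S := by
        have hmul : (0:ℝ) < (1 - 1/((d:ℝ)+2)) * goodCard U (S.erase e) :=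
          mul_pos (by linarith) hp
        linarith
      exact_mod_cast hfinal

end Main



/-- **Hypergraph two-colorability via the Lovász Local Lemma.** If `H` is a
`k`-uniform hypergraph in which every hyperedge intersects at most `d` other
hyperedges, and `e(d+1) ≤ 2^(k-1)`, then `H` is two-colorable: no hyperedge is
monochromatic. -/
theorem hypergraph_two_colorable {V : Type*} [DecidableEq V]
    (E : Finset (Finset V)) (k d : ℕ)
    (huniform : ∀ e ∈ E, e.card = k)
    (hinter : ∀ e ∈ E, (E.filter (fun f => f ≠ e ∧ (e ∩ f).Nonempty)).card ≤ d)
    (hLLL : Real.exp 1 * ((d : ℝ) + 1) ≤ 2 ^ (k - 1)) :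
    ∃ c : V → Bool, ∀ e ∈ E, (∃ x ∈ e, c x = true) ∧ (∃ x ∈ e, c x = false) := by
  set U : Finset V := E.biUnion id with hUdef
  have hUE : ∀ f ∈ E, f ⊆ U := by
    intro f hf x hx
    rw [hUdef]
    exact Finset.mem_biUnion.2 ⟨f, hf, hx⟩
  have hpos : 0 < goodCard U E :=
    good_pos E U hUE k d huniform hinter hLLL E.card E (Finset.Subset.refl E) le_rfl
  obtain ⟨c0, hc0mem⟩ := Finset.card_pos.1 hpos
  have hc0 : ∀ f ∈ E, ¬ monoOn f (extU U c0) := (Finset.mem_filter.1 hc0mem).2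
  refine ⟨extU U c0, fun e he => ?_⟩
  have h := hc0 e he
  unfold monoOn at h
  push_neg at h
  obtain ⟨⟨x1, hx1, hb1⟩, ⟨x2, hx2, hb2⟩⟩ := h
  exact ⟨⟨x2, hx2, by simpa using hb2⟩, ⟨x1, hx1, by simpa using hb1⟩⟩
end

section
/- Let H = A_1 ∧ ⋯ ∧ A_N be a CNF formula over Boolean variables x_1, ..., x_m in which every clause consists of exactly k distinct literals on k distinct variables, and suppose each clause intersects (shares a variable, possibly negated, with) at most d other clauses. If e·(d+1) ≤ 2^k, where e is Euler's number, then H is satisfiable: there exists a truth assignment to x_1, ..., x_m under which every clause A_i evaluates to true. -/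
/-!
A counting form of the Lovász Local Lemma. Put `q = (d+1)/(d+2)`; we show by strong induction
on a set `S` of clauses that adding a further clause `i` keeps at least a `q`-fraction of the
assignments satisfying `S`. The assignments satisfying `S` but falsifying `i` are at most
`2⁻ᵏ` times those satisfying the clauses `D ⊆ S` sharing no variable with `i`, since falsifying
`i` pins down its `k` variables, which `D` does not see. Adding the at most `d` remaining
clauses of `S` to `D` one at a time loses a factor `q` each (induction hypothesis), so the
falsifying assignments are at most `2⁻ᵏ q⁻ᵈ ≤ 1 - q` times those satisfying `S`, the last
inequality being `e(d+1) ≤ 2ᵏ` since `(1 + 1/(d+1))^(d+1) ≤ e`. Starting from all `2ᵐ`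
assignments, at least `qᴺ 2ᵐ > 0` satisfy every clause.
-/

open Finset Real

lemma pow_card_mul_le_of_forall_insert {ι : Type*} [DecidableEq ι] (f : Finset ι → ℝ) {q : ℝ}
    (hq : 0 ≤ q) {U T : Finset ι} (hUT : Disjoint U T)
    (h : ∀ W ⊆ T, ∀ a ∈ T, a ∉ W → q * f (U ∪ W) ≤ f (insert a (U ∪ W))) :
    q ^ #T * f U ≤ f (U ∪ T) := by
  induction T using Finset.induction_on with
  | empty => simp
  | @insert a T ha ih =>
    have hsub : T ⊆ insert a T := subset_insert a T
    calc q ^ #(insert a T) * f U = q * (q ^ #T * f U) := by rw [card_insert_of_notMem ha]; ring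
      _ ≤ q * f (U ∪ T) :=
        mul_le_mul_of_nonneg_left (ih (disjoint_of_subset_right hsub hUT)
          fun W hW a ha => h W (hW.trans hsub) a (hsub ha)) hq
      _ ≤ f (U ∪ insert a T) := by
        rw [union_insert]; exact h T hsub a (mem_insert_self a T) ha

lemma one_le_one_sub_mul_pow_mul_of_exp_mul_le {d k : ℕ} (h : exp 1 * (d + 1) ≤ 2 ^ k) :
    1 ≤ (1 - (d + 1) / (d + 2)) * (((d + 1) / (d + 2)) ^ d * 2 ^ k : ℝ) := by
  have he : ((d + 2 : ℝ) / (d + 1)) ^ (d + 1) ≤ exp 1 := by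
    convert one_add_inv_pow_le_exp (n := d + 1) using 2
    push_cast; field_simp; ring
  have key : (d + 2 : ℝ) ^ (d + 1) ≤ (d + 1) ^ d * 2 ^ k := by
    rw [div_pow, div_le_iff₀ (by positivity)] at he
    calc (d + 2 : ℝ) ^ (d + 1) ≤ exp 1 * (d + 1) * (d + 1) ^ d := by
          rwa [mul_assoc, ← pow_succ']
      _ ≤ 2 ^ k * (d + 1) ^ d := by gcongr
      _ = (d + 1) ^ d * 2 ^ k := mul_comm _ _
  rw [div_pow, one_sub_div (by positivity), ← mul_assoc, div_mul_div_comm, div_mul_eq_mul_div,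
    one_le_div (by positivity)]
  calc _ = (d + 2 : ℝ) ^ (d + 1) := by ring
    _ ≤ _ := key
    _ = _ := by ring

namespace CNF

variable {α ι : Type*} [DecidableEq α]

lemma card_filter_falsified_mul_le (C : Finset (α × Bool)) (s : Finset (α → Bool))
    (hs : ∀ σ ∈ s, ∀ τ, (∀ v ∉ C.image Prod.fst, σ v = τ v) → τ ∈ s) :
    #{σ ∈ s | ¬∃ l ∈ C, σ l.1 = l.2} * 2 ^ #(C.image Prod.fst) ≤ #s := by
  set V := C.image Prod.fst
  rw [← card_powerset, ← card_product]
  refine card_le_card_of_injOn (fun p v => if v ∈ p.2 then !p.1 v else p.1 v) ?_ ?_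
  · rintro ⟨σ, F⟩ hp
    simp only [coe_product, Set.mem_prod, mem_coe, mem_filter, mem_powerset] at hp
    refine hs σ hp.1.1 _ fun v hv => ?_
    dsimp only
    rw [if_neg fun hF => hv (hp.2 hF)]
  · rintro ⟨σ₁, F₁⟩ hp₁ ⟨σ₂, F₂⟩ hp₂ heq
    simp only [coe_product, Set.mem_prod, mem_coe, mem_filter, mem_powerset] at hp₁ hp₂
    have hv := fun v => congrFun heq v
    simp only at hv
    -- a falsifying assignment is forced on `V`, so `σ₁` and `σ₂` can only differ off `V`
    have hσ : σ₁ = σ₂ := by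
      funext v
      by_cases hvV : v ∈ V
      · obtain ⟨l, hl, rfl⟩ := mem_image.mp hvV
        have h₁ := hp₁.1.2; have h₂ := hp₂.1.2
        push Not at h₁ h₂
        rw [Bool.eq_not_of_ne (h₁ l hl), Bool.eq_not_of_ne (h₂ l hl)]
      · simpa only [if_neg fun hF => hvV (hp₁.2 hF), if_neg fun hF => hvV (hp₂.2 hF)]
          using hv v
    subst hσ
    have hF : F₁ = F₂ := by
      ext v
      have := hv v
      by_cases h₁ : v ∈ F₁ <;> by_cases h₂ : v ∈ F₂ <;> simp_all
    rw [hF]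

variable [Fintype α]

def satisfying (A : ι → Finset (α × Bool)) (S : Finset ι) : Finset (α → Bool) :=
  {σ | ∀ i ∈ S, ∃ l ∈ A i, σ l.1 = l.2}

@[simp]
lemma mem_satisfying {A : ι → Finset (α × Bool)} {S : Finset ι} {σ : α → Bool} :
    σ ∈ satisfying A S ↔ ∀ i ∈ S, ∃ l ∈ A i, σ l.1 = l.2 := by
  simp [satisfying]

lemma satisfying_empty (A : ι → Finset (α × Bool)) : satisfying A ∅ = univ := by
  ext; simp

lemma satisfying_anti (A : ι → Finset (α × Bool)) {S T : Finset ι} (hST : S ⊆ T) :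
    satisfying A T ⊆ satisfying A S :=
  fun _ hσ => mem_satisfying.mpr fun i hi => mem_satisfying.mp hσ i (hST hi)

lemma mem_satisfying_of_forall_notMem_eq {A : ι → Finset (α × Bool)} {V : Finset α}
    {T : Finset ι} (hT : ∀ j ∈ T, Disjoint V ((A j).image Prod.fst)) {σ τ : α → Bool}
    (hσ : σ ∈ satisfying A T) (hστ : ∀ v ∉ V, σ v = τ v) : τ ∈ satisfying A T := by
  refine mem_satisfying.mpr fun j hj => ?_
  obtain ⟨l, hl, hσl⟩ := mem_satisfying.mp hσ j hj
  exact ⟨l, hl, hστ l.1 (disjoint_right.mp (hT j hj) (mem_image_of_mem _ hl)) ▸ hσl⟩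

lemma card_falsifying_mul_le_card_satisfying_disjoint {A : ι → Finset (α × Bool)} {i : ι}
    {k : ℕ} (hk : #((A i).image Prod.fst) = k) (S : Finset ι) :
    #{σ ∈ satisfying A S | ¬∃ l ∈ A i, σ l.1 = l.2} * 2 ^ k ≤
      #(satisfying A {j ∈ S | Disjoint ((A i).image Prod.fst) ((A j).image Prod.fst)}) :=
  calc _ ≤ #{σ ∈ satisfying A {j ∈ S | Disjoint ((A i).image Prod.fst) ((A j).image Prod.fst)} |
          ¬∃ l ∈ A i, σ l.1 = l.2} * 2 ^ k := by
        gcongr; exact satisfying_anti A (filter_subset _ _)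
    _ ≤ _ := hk ▸ card_filter_falsified_mul_le _ _ fun _ hσ _ =>
        mem_satisfying_of_forall_notMem_eq (fun _ hj => (mem_filter.mp hj).2) hσ

variable [DecidableEq ι]

lemma satisfying_insert (A : ι → Finset (α × Bool)) (S : Finset ι) (i : ι) :
    satisfying A (insert i S) = {σ ∈ satisfying A S | ∃ l ∈ A i, σ l.1 = l.2} := by
  ext; simp [and_comm]

lemma card_satisfying_insert_add (A : ι → Finset (α × Bool)) (S : Finset ι) (i : ι) :
    #(satisfying A (insert i S)) + #{σ ∈ satisfying A S | ¬∃ l ∈ A i, σ l.1 = l.2} =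
      #(satisfying A S) := by
  rw [satisfying_insert]
  exact card_filter_add_card_filter_not _

theorem mul_card_satisfying_le_card_satisfying_insert [Fintype ι] {A : ι → Finset (α × Bool)}
    {k d : ℕ} {q : ℝ} (hq0 : 0 ≤ q) (hq1 : q ≤ 1) (hq : 1 ≤ (1 - q) * (q ^ d * 2 ^ k))
    (hvars : ∀ i, #((A i).image Prod.fst) = k)
    (hinter : ∀ i,
      #{j | j ≠ i ∧ ((A i).image Prod.fst ∩ (A j).image Prod.fst).Nonempty} ≤ d)
    (S : Finset ι) : ∀ i ∉ S, q * #(satisfying A S) ≤ #(satisfying A (insert i S)) := by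
  induction S using Finset.strongInduction with | H S ih => ?_
  intro i hi
  set D := {j ∈ S | Disjoint ((A i).image Prod.fst) ((A j).image Prod.fst)}
  set N := {j ∈ S | ¬Disjoint ((A i).image Prod.fst) ((A j).image Prod.fst)}
  -- add the clauses of `N` to `D` one at a time, each step costing a factor `q` by induction
  have hchain : q ^ #N * #(satisfying A D) ≤ #(satisfying A S) := by
    have hstep : ∀ W ⊆ N, ∀ a ∈ N, a ∉ W →
        q * #(satisfying A (D ∪ W)) ≤ #(satisfying A (insert a (D ∪ W))) := by
      intro W hW a ha haW
      have haDW : a ∉ D ∪ W :=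
        notMem_union.mpr ⟨fun h => (mem_filter.mp ha).2 (mem_filter.mp h).2, haW⟩
      have hDW : D ∪ W ⊆ S := union_subset (filter_subset _ _) (hW.trans (filter_subset _ _))
      exact ih _ ((ssubset_iff_of_subset hDW).mpr ⟨a, (mem_filter.mp ha).1, haDW⟩) a haDW
    simpa only [D, N, filter_union_filter_not_eq] using
      pow_card_mul_le_of_forall_insert (fun T => (#(satisfying A T) : ℝ)) hq0
        (disjoint_filter_filter_not S S _) hstep
  have hN : q ^ d ≤ q ^ #N := by
    refine pow_le_pow_of_le_one hq0 hq1 ((card_le_card fun j hj => ?_).trans (hinter i))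
    obtain ⟨hjS, hij⟩ := mem_filter.mp hj
    exact mem_filter.mpr
      ⟨mem_univ j, fun h => hi (h ▸ hjS), not_disjoint_iff_nonempty_inter.mp hij⟩
  have hviol : (#{σ ∈ satisfying A S | ¬∃ l ∈ A i, σ l.1 = l.2} * 2 ^ k : ℝ) ≤
      #(satisfying A D) := mod_cast card_falsifying_mul_le_card_satisfying_disjoint (hvars i) S
  have hsplit : (#(satisfying A (insert i S)) : ℝ) +
      #{σ ∈ satisfying A S | ¬∃ l ∈ A i, σ l.1 = l.2} = #(satisfying A S) :=
    mod_cast card_satisfying_insert_add A S i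
  set v : ℝ := ↑(#{σ ∈ satisfying A S | ¬∃ l ∈ A i, σ l.1 = l.2})
  suffices v ≤ (1 - q) * #(satisfying A S) by linarith
  calc v ≤ (1 - q) * (q ^ d * 2 ^ k) * v := le_mul_of_one_le_left (Nat.cast_nonneg _) hq
    _ = (1 - q) * (q ^ d * (v * 2 ^ k)) := by ring
    _ ≤ (1 - q) * (q ^ #N * #(satisfying A D)) := by gcongr
    _ ≤ (1 - q) * #(satisfying A S) := by gcongr

end CNF

open CNF in
theorem kCNF_satisfiable_general (m N k d : ℕ) (A : Fin N → Finset (Fin m × Bool))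
    (hvars : ∀ i, ((A i).image Prod.fst).card = k)
    (hinter : ∀ i : Fin N,
      (Finset.univ.filter (fun j : Fin N => j ≠ i ∧
        (((A i).image Prod.fst) ∩ ((A j).image Prod.fst)).Nonempty)).card ≤ d)
    (hLLL : Real.exp 1 * ((d : ℝ) + 1) ≤ 2 ^ k) :
    ∃ σ : Fin m → Bool, ∀ i : Fin N, ∃ l ∈ A i, σ l.1 = l.2 := by
  set q : ℝ := (d + 1) / (d + 2)
  have hq0 : 0 < q := by positivity
  have hq1 : q ≤ 1 := div_le_one_of_le₀ (by linarith) (by positivity)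
  have hstep := mul_card_satisfying_le_card_satisfying_insert hq0.le hq1
    (one_le_one_sub_mul_pow_mul_of_exp_mul_le hLLL) hvars hinter
  have hgrow : q ^ N * 2 ^ m ≤ #(satisfying A univ) := by
    simpa [satisfying_empty] using pow_card_mul_le_of_forall_insert
      (fun T => (#(satisfying A T) : ℝ)) hq0.le (disjoint_empty_left univ)
      fun W _ a _ ha => by simpa using hstep W a ha
  have hpos : (0 : ℝ) < q ^ N * 2 ^ m := by positivity
  obtain ⟨σ, hσ⟩ := card_pos.mp (mod_cast hpos.trans_le hgrow)
  exact ⟨σ, fun i => mem_satisfying.mp hσ i (mem_univ i)⟩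

/-- **Satisfiability of `k`-CNF formulas via the Lovász Local Lemma.** Consider a CNF
formula with `N` clauses over `m` Boolean variables, where each clause is a set of
exactly `k` literals (pairs of a variable and a polarity) on `k` distinct variables.
If each clause shares a variable with at most `d` other clauses and
`e(d+1) ≤ 2^k`, then the formula is satisfiable. -/
theorem kCNF_satisfiable (m N k d : ℕ) (A : Fin N → Finset (Fin m × Bool))
    (hsize : ∀ i, (A i).card = k)
    (hvars : ∀ i, ((A i).image Prod.fst).card = k)
    (hinter : ∀ i : Fin N,
      (Finset.univ.filter (fun j : Fin N => j ≠ i ∧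
        (((A i).image Prod.fst) ∩ ((A j).image Prod.fst)).Nonempty)).card ≤ d)
    (hLLL : Real.exp 1 * ((d : ℝ) + 1) ≤ 2 ^ k) :
    ∃ σ : Fin m → Bool, ∀ i : Fin N, ∃ l ∈ A i, σ l.1 = l.2 :=
  kCNF_satisfiable_general m N k d A hvars hinter hLLL
end
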